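/- Let A be a Banach algebra and I a closed two-sided ideal of A. If A is strong pseudo-amenable, then the quotient Banach algebra A/I is strong pseudo-amenable. -/

import Mathlib

noncomputable section

open ContinuousLinearMap NormedSpace

/-- A directed index system for nets. -/
structure DirSys : Type 1 where
  ι : Type
  le : ι → ι → Prop
  refl : ∀ i, le i i
  trans : ∀ {i j k}, le i j → le j k → le i k
  nonempty : Nonempty ι
  directed : ∀ i j, ∃ k, le i k ∧ le j k

/-- Convergence of a net indexed by a directed system, in a (pseudo)metric space. -/
def DirSys.Tendsto (D : DirSys) {X : Type*} [PseudoMetricSpace X] (m : D.ι → X) (x : X) : Prop :=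
  ∀ ε : ℝ, 0 < ε → ∃ i, ∀ j, D.le i j → dist (m j) x < ε

variable (A : Type*) [NonUnitalNormedRing A] [NormedSpace ℂ A]
  [IsScalarTower ℂ A A] [SMulCommClass ℂ A A]

/-- The continuous bilinear forms on `A`, i.e. the dual space of the projective tensor
product `A ⊗̂ A`. -/
abbrev BilForms := A →L[ℂ] StrongDual ℂ A

instance : NormedAddCommGroup (BilForms A) := ContinuousLinearMap.toNormedAddCommGroup

instance : NormedSpace ℂ (BilForms A) := ContinuousLinearMap.toNormedSpace

/-- The bidual `(A ⊗̂ A)**` of the projective tensor product, realized concretely as the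
dual space of the space of continuous bilinear forms on `A` (the latter being canonically,
isometrically, the dual of `A ⊗̂ A`). -/
abbrev TensorBidual := StrongDual ℂ (BilForms A)

/-- The bidual `A**` of `A`. -/
abbrev Bidual := StrongDual ℂ (StrongDual ℂ A)

variable {A}

/-- The elementary tensor `x ⊗ y`, viewed inside `(A ⊗̂ A)**` via the canonical isometric
embedding of `A ⊗̂ A` into its bidual. -/
def elemT (x y : A) : TensorBidual A :=
  (ContinuousLinearMap.apply ℂ ℂ y).comp (ContinuousLinearMap.apply ℂ (StrongDual ℂ A) x)

variable (A)

/-- The canonical isometric copy of `A ⊗̂ A` inside its bidual: the closure of the linear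
span of the elementary tensors. -/
def ptp : Submodule ℂ (TensorBidual A) :=
  (Submodule.span ℂ {m : TensorBidual A | ∃ x y : A, m = elemT x y}).topologicalClosure

/-- The map `f ↦ f·a` on bilinear forms, `(f·a)(x,y) = f(ax, y)`; predual of the left
module action of `A` on `(A ⊗̂ A)**`. -/
def leftBil (a : A) : BilForms A →L[ℂ] BilForms A :=
  (compL ℂ A A (StrongDual ℂ A)).flip (ContinuousLinearMap.mul ℂ A a)

/-- The map `f ↦ a·f` on bilinear forms, `(a·f)(x,y) = f(x, ya)`; predual of the right
module action of `A` on `(A ⊗̂ A)**`. -/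
def rightBil (a : A) : BilForms A →L[ℂ] BilForms A :=
  compL ℂ A (StrongDual ℂ A) (StrongDual ℂ A)
    ((compL ℂ A A ℂ).flip ((ContinuousLinearMap.mul ℂ A).flip a))

variable {A}

/-- The left module action `a · m` of `A` on `(A ⊗̂ A)**`, extending
`a · (x ⊗ y) = (a x) ⊗ y`. -/
def tsmulL (a : A) (m : TensorBidual A) : TensorBidual A := m.comp (leftBil A a)

/-- The right module action `m · a` of `A` on `(A ⊗̂ A)**`, extending
`(x ⊗ y) · a = x ⊗ (y a)`. -/
def tsmulR (a : A) (m : TensorBidual A) : TensorBidual A := m.comp (rightBil A a)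

variable (A)

/-- The adjoint `π_A* : A* → (A ⊗̂ A)*` of the product morphism `π_A`, namely
`(π_A* f)(x, y) = f (x y)`. -/
def piStar : StrongDual ℂ A →L[ℂ] BilForms A :=
  ((compL ℂ A (A →L[ℂ] A) (StrongDual ℂ A)).flip (ContinuousLinearMap.mul ℂ A)).comp
    (compL ℂ A A ℂ)

variable {A}

/-- The second adjoint `π_A** : (A ⊗̂ A)** → A**` of the product morphism. -/
def piSS (m : TensorBidual A) : Bidual A := m.comp (piStar A)

variable (A)

/-- The map `f ↦ f·a` on `A*`, `(f·a)(x) = f(ax)`. -/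
def dualROp (a : A) : StrongDual ℂ A →L[ℂ] StrongDual ℂ A :=
  (compL ℂ A A ℂ).flip (ContinuousLinearMap.mul ℂ A a)

/-- The map `f ↦ a·f` on `A*`, `(a·f)(x) = f(xa)`. -/
def dualLOp (a : A) : StrongDual ℂ A →L[ℂ] StrongDual ℂ A :=
  (compL ℂ A A ℂ).flip ((ContinuousLinearMap.mul ℂ A).flip a)

variable {A}

/-- The product `a · Φ` of `a ∈ A` and `Φ ∈ A**`: `(a·Φ)(f) = Φ(f·a)`. -/
def bsmulL (a : A) (Φ : Bidual A) : Bidual A := Φ.comp (dualROp A a)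

/-- The product `Φ · a` of `Φ ∈ A**` and `a ∈ A`: `(Φ·a)(f) = Φ(a·f)`. -/
def bsmulR (a : A) (Φ : Bidual A) : Bidual A := Φ.comp (dualLOp A a)

/-- The canonical isometric embedding of `A` into its bidual. -/
def inclB (a : A) : Bidual A := NormedSpace.inclusionInDoubleDual ℂ A a

variable (A)

/-- A Banach algebra `A` is *strong pseudo-amenable* if there is a (not necessarily bounded)
net `(m_α)` in `(A ⊗̂ A)**` such that `a·m_α − m_α·a → 0` and
`a·π_A**(m_α) = π_A**(m_α)·a → a` for every `a ∈ A`. -/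
def StrongPseudoAmenable : Prop :=
  ∃ (D : DirSys) (m : D.ι → TensorBidual A),
    (∀ a : A, D.Tendsto (fun α => tsmulL a (m α) - tsmulR a (m α)) 0) ∧
    (∀ (a : A) (α : D.ι), bsmulL a (piSS (m α)) = bsmulR a (piSS (m α))) ∧
    (∀ a : A, D.Tendsto (fun α => bsmulR a (piSS (m α))) (inclB a))

/-- A Banach algebra `A` is *pseudo-amenable* if there is a (not necessarily bounded)
net `(m_α)` in `A ⊗̂ A` such that `a·m_α − m_α·a → 0` and `π_A(m_α)a → a` for every `a ∈ A`. -/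
def PseudoAmenable : Prop :=
  ∃ (D : DirSys) (m : D.ι → TensorBidual A),
    (∀ α, m α ∈ ptp A) ∧
    (∀ a : A, D.Tendsto (fun α => tsmulL a (m α) - tsmulR a (m α)) 0) ∧
    (∀ a : A, D.Tendsto (fun α => bsmulR a (piSS (m α))) (inclB a))

/-- A Banach algebra `A` is *pseudo-contractible* if there is a net `(m_α)` in `A ⊗̂ A`
such that `a·m_α = m_α·a` and `π_A(m_α)a → a` for every `a ∈ A`. -/
def PseudoContractible : Prop :=
  ∃ (D : DirSys) (m : D.ι → TensorBidual A),
    (∀ α, m α ∈ ptp A) ∧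
    (∀ (a : A) (α : D.ι), tsmulL a (m α) = tsmulR a (m α)) ∧
    (∀ a : A, D.Tendsto (fun α => bsmulR a (piSS (m α))) (inclB a))

/-- A Banach algebra `A` is *amenable* if it has a bounded approximate diagonal: a bounded
net `(m_α)` in `A ⊗̂ A` such that `a·m_α − m_α·a → 0` and `π_A(m_α)a → a` for every `a ∈ A`. -/
def AmenableBanachAlgebra : Prop :=
  ∃ (D : DirSys) (m : D.ι → TensorBidual A) (C : ℝ),
    (∀ α, m α ∈ ptp A) ∧
    (∀ α, ‖m α‖ ≤ C) ∧
    (∀ a : A, D.Tendsto (fun α => tsmulL a (m α) - tsmulR a (m α)) 0) ∧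
    (∀ a : A, D.Tendsto (fun α => bsmulR a (piSS (m α))) (inclB a))

end

/-! Any continuous surjective homomorphism `φ : A → B` of Banach algebras carries a strong
pseudo-amenability net of `A` to one of `B`: the second adjoints of `φ` and of `φ ⊗ φ`
intertwine the module actions of `A` on `A**` and `(A ⊗̂ A)**` with those of `B` (through `φ`),
commute with the product morphisms and with the canonical embeddings, and are continuous, so
they preserve every condition in the definition. -/

theorem DirSys.Tendsto.comp_continuousAt {D : DirSys} {X Y : Type*} [PseudoMetricSpace X]
    [PseudoMetricSpace Y] {f : X → Y} {m : D.ι → X} {x : X} (hf : ContinuousAt f x)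
    (h : D.Tendsto m x) : D.Tendsto (fun α => f (m α)) (f x) := by
  intro ε hε
  obtain ⟨δ, hδ, hfδ⟩ := Metric.continuousAt_iff.mp hf ε hε
  obtain ⟨i, hi⟩ := h δ hδ
  exact ⟨i, fun j hj => hfδ (hi j hj)⟩

noncomputable section

namespace ContinuousLinearMap

def strongDualMap {E F : Type*} [NormedAddCommGroup E] [NormedSpace ℂ E] [NormedAddCommGroup F]
    [NormedSpace ℂ F] (φ : E →L[ℂ] F) : StrongDual ℂ F →L[ℂ] StrongDual ℂ E :=
  (compL ℂ E F ℂ).flip φ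

variable {A B : Type*} [NonUnitalNormedRing A] [NormedSpace ℂ A] [NonUnitalNormedRing B]
  [NormedSpace ℂ B] (φ : A →L[ℂ] B)

def bilFormsMap : BilForms B →L[ℂ] BilForms A :=
  (compL ℂ A (StrongDual ℂ B) (StrongDual ℂ A) φ.strongDualMap).comp
    ((compL ℂ A B (StrongDual ℂ B)).flip φ)

def bidualMap : Bidual A →L[ℂ] Bidual B :=
  (compL ℂ (StrongDual ℂ B) (StrongDual ℂ A) ℂ).flip φ.strongDualMap

/-- The second adjoint `(φ ⊗ φ)** : (A ⊗̂ A)** → (B ⊗̂ B)**`. -/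
def tensorBidualMap : TensorBidual A →L[ℂ] TensorBidual B :=
  (compL ℂ (BilForms B) (BilForms A) ℂ).flip φ.bilFormsMap

theorem inclB_map (a : A) : inclB (φ a) = φ.bidualMap (inclB a) := rfl

variable [IsScalarTower ℂ A A] [SMulCommClass ℂ A A] [IsScalarTower ℂ B B] [SMulCommClass ℂ B B]
  {φ} (hφ : ∀ x y, φ (x * y) = φ x * φ y)
include hφ

theorem tsmulL_tensorBidualMap (a : A) (n : TensorBidual A) :
    tsmulL (φ a) (φ.tensorBidualMap n) = φ.tensorBidualMap (tsmulL a n) := by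
  ext F
  show n (φ.bilFormsMap (leftBil B (φ a) F)) = n (leftBil A a (φ.bilFormsMap F))
  congr 1
  ext x y
  show F (φ a * φ x) (φ y) = F (φ (a * x)) (φ y)
  rw [hφ]

theorem tsmulR_tensorBidualMap (a : A) (n : TensorBidual A) :
    tsmulR (φ a) (φ.tensorBidualMap n) = φ.tensorBidualMap (tsmulR a n) := by
  ext F
  show n (φ.bilFormsMap (rightBil B (φ a) F)) = n (rightBil A a (φ.bilFormsMap F))
  congr 1
  ext x y
  show F (φ x) (φ y * φ a) = F (φ x) (φ (y * a))
  rw [hφ]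

theorem piSS_tensorBidualMap (n : TensorBidual A) :
    piSS (φ.tensorBidualMap n) = φ.bidualMap (piSS n) := by
  ext f
  show n (φ.bilFormsMap (piStar B f)) = n (piStar A (φ.strongDualMap f))
  congr 1
  ext x y
  show f (φ x * φ y) = f (φ (x * y))
  rw [hφ]

theorem bsmulL_bidualMap (a : A) (Φ : Bidual A) :
    bsmulL (φ a) (φ.bidualMap Φ) = φ.bidualMap (bsmulL a Φ) := by
  ext f
  show Φ (φ.strongDualMap (dualROp B (φ a) f)) = Φ (dualROp A a (φ.strongDualMap f))
  congr 1
  ext x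
  show f (φ a * φ x) = f (φ (a * x))
  rw [hφ]

theorem bsmulR_bidualMap (a : A) (Φ : Bidual A) :
    bsmulR (φ a) (φ.bidualMap Φ) = φ.bidualMap (bsmulR a Φ) := by
  ext f
  show Φ (φ.strongDualMap (dualLOp B (φ a) f)) = Φ (dualLOp A a (φ.strongDualMap f))
  congr 1
  ext x
  show f (φ x * φ a) = f (φ (x * a))
  rw [hφ]

end ContinuousLinearMap

end

open ContinuousLinearMap in
theorem StrongPseudoAmenable.of_surjective {A B : Type*} [NonUnitalNormedRing A]
    [NormedSpace ℂ A] [IsScalarTower ℂ A A] [SMulCommClass ℂ A A] [NonUnitalNormedRing B]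
    [NormedSpace ℂ B] [IsScalarTower ℂ B B] [SMulCommClass ℂ B B] (hA : StrongPseudoAmenable A)
    (φ : A →L[ℂ] B) (hφ : ∀ x y, φ (x * y) = φ x * φ y) (hsurj : Function.Surjective φ) :
    StrongPseudoAmenable B := by
  obtain ⟨D, m, hcomm, hpi, hunit⟩ := hA
  refine ⟨D, fun α => φ.tensorBidualMap (m α), ?_, ?_, ?_⟩
  · intro b
    obtain ⟨a, rfl⟩ := hsurj b
    simpa only [tsmulL_tensorBidualMap hφ, tsmulR_tensorBidualMap hφ, map_sub, map_zero] using
      (hcomm a).comp_continuousAt φ.tensorBidualMap.continuous.continuousAt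
  · intro b α
    obtain ⟨a, rfl⟩ := hsurj b
    rw [piSS_tensorBidualMap hφ, bsmulL_bidualMap hφ, bsmulR_bidualMap hφ, hpi a α]
  · intro b
    obtain ⟨a, rfl⟩ := hsurj b
    simpa only [piSS_tensorBidualMap hφ, bsmulR_bidualMap hφ, inclB_map] using
      (hunit a).comp_continuousAt φ.bidualMap.continuous.continuousAt

theorem strongPseudoAmenable_quotient_general
    (A : Type) [NonUnitalNormedRing A] [NormedSpace ℂ A] [IsScalarTower ℂ A A]
    [SMulCommClass ℂ A A]
    (hA : StrongPseudoAmenable A)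
    (Q : Type) [NonUnitalNormedRing Q] [NormedSpace ℂ Q] [IsScalarTower ℂ Q Q]
    [SMulCommClass ℂ Q Q]
    (q : A → Q) (hlin : IsLinearMap ℂ q) (hcont : Continuous q)
    (hmul : ∀ x y : A, q (x * y) = q x * q y) (hsurj : Function.Surjective q) :
    StrongPseudoAmenable Q :=
  hA.of_surjective ⟨hlin.mk' q, hcont⟩ hmul hsurj

/-- Let `A` be a Banach algebra and `I` a closed two-sided ideal of `A`.
If `A` is strong pseudo-amenable, then the quotient Banach algebra `A/I` is strong
pseudo-amenable.  (The quotient is formalized as any Banach algebra `Q` together with a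
continuous surjective algebra homomorphism `q : A → Q` whose kernel is exactly `I`; by the
open mapping theorem any such `Q` is canonically topologically isomorphic to `A/I`.) -/
theorem strongPseudoAmenable_quotient
    (A : Type) [NonUnitalNormedRing A] [NormedSpace ℂ A] [IsScalarTower ℂ A A]
    [SMulCommClass ℂ A A] [CompleteSpace A]
    (I : TwoSidedIdeal A) (hI : IsClosed (I : Set A))
    (hA : StrongPseudoAmenable A)
    (Q : Type) [NonUnitalNormedRing Q] [NormedSpace ℂ Q] [IsScalarTower ℂ Q Q]
    [SMulCommClass ℂ Q Q] [CompleteSpace Q]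
    (q : A → Q) (hlin : IsLinearMap ℂ q) (hcont : Continuous q)
    (hmul : ∀ x y : A, q (x * y) = q x * q y) (hsurj : Function.Surjective q)
    (hker : ∀ x : A, q x = 0 ↔ x ∈ I) :
    StrongPseudoAmenable Q :=
  strongPseudoAmenable_quotient_general A hA Q q hlin hcont hmul hsurj
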